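/- Let K > 0. There exist constants 0 < c ≤ C depending only on K such that for every real p with 1 ≤ p < ∞, every strictly increasing sequence λ : ℤ → ℝ with λ_n → ±∞ as n → ±∞ and λ_{n+1} − λ_n ≤ K for all n, and every f : ℤ → ℂ: c·(‖f‖_{eq,W}^p)^{1/p} ≤ (‖f‖_{simp,W}^p)^{1/p} ≤ C·(‖f‖_{eq,W}^p)^{1/p}, where ‖f‖_{eq,W}^p := ∑_{n∈ℤ} (λ_{n+2} − λ_n)|f[λ_n,λ_{n+1},λ_{n+2}]|^p + ∑_{n∈ℤ} (λ_{n+2} − λ_n)|f_n|^p + ∑_{n∈ℤ} (λ_{n+2} − λ_n)^{p+1}|f[λ_n,λ_{n+1}]|^p and ‖f‖_{simp,W}^p := ∑_{n∈ℤ} (λ_{n+2} − λ_n)|f[λ_n,λ_{n+1},λ_{n+2}]|^p + ∑_{n∈ℤ} (λ_{n+1} − λ_{n−1})|f_n|^p (all quantities in [0,∞]). -/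

import Mathlib

open MeasureTheory
open scoped ENNReal NNReal

/-- `lam` is a strictly increasing sequence tending to `-∞` at `-∞` and `+∞` at `+∞`. -/
def GoodSeq (lam : ℤ → ℝ) : Prop :=
  StrictMono lam ∧ Filter.Tendsto lam Filter.atBot Filter.atBot ∧
    Filter.Tendsto lam Filter.atTop Filter.atTop

/-- `F` is an admissible `r`-extension of `f : ℤ → ℂ`, with associated `r`-th derivative `G`:
`F` is `(r-1)` times continuously differentiable, `G` is locally integrable,
`F^{(r-1)}(b) - F^{(r-1)}(a) = ∫_a^b G` for all `a ≤ b`, and `F (lam n) = f n` for all `n`. -/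
def AdmissibleExt (r : ℕ) (lam : ℤ → ℝ) (f : ℤ → ℂ) (F G : ℝ → ℂ) : Prop :=
  ContDiff ℝ (r - 1 : ℕ) F ∧ MeasureTheory.LocallyIntegrable G volume ∧
  (∀ a b : ℝ, a ≤ b →
      iteratedDeriv (r - 1) F b - iteratedDeriv (r - 1) F a = ∫ t in a..b, G t) ∧
  (∀ n : ℤ, F (lam n) = f n)

/-- Homogeneous trace seminorm `‖f‖_{L^r_p|Λ}`, valued in `[0,∞]`. -/
noncomputable def traceL (r : ℕ) (p : ℝ) (lam : ℤ → ℝ) (f : ℤ → ℂ) : ℝ≥0∞ :=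
  ⨅ (F : ℝ → ℂ) (G : ℝ → ℂ) (_ : AdmissibleExt r lam f F G),
    (∫⁻ t, ENNReal.ofReal (‖G t‖ ^ p)) ^ (1 / p)

/-- Trace norm `‖f‖_{W^r_p|Λ}`, valued in `[0,∞]`. -/
noncomputable def traceW (r : ℕ) (p : ℝ) (lam : ℤ → ℝ) (f : ℤ → ℂ) : ℝ≥0∞ :=
  ⨅ (F : ℝ → ℂ) (G : ℝ → ℂ) (_ : AdmissibleExt r lam f F G),
    ((∫⁻ t, ENNReal.ofReal (‖F t‖ ^ p)) +
      (∫⁻ t, ENNReal.ofReal (‖G t‖ ^ p))) ^ (1 / p)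

/-- First order divided difference `f[λ_n, λ_{n+1}]`. -/
noncomputable def dd1 (lam : ℤ → ℝ) (f : ℤ → ℂ) (n : ℤ) : ℂ :=
  (f (n + 1) - f n) / ((lam (n + 1) - lam n : ℝ) : ℂ)

/-- Second order divided difference `f[λ_n, λ_{n+1}, λ_{n+2}]`. -/
noncomputable def dd2 (lam : ℤ → ℝ) (f : ℤ → ℂ) (n : ℤ) : ℂ :=
  (dd1 lam f (n + 1) - dd1 lam f n) / ((lam (n + 2) - lam n : ℝ) : ℂ)

/-- Divided difference `f[λ_n, …, λ_{n+k}]` of order `k`. -/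
noncomputable def ddiv (lam : ℤ → ℝ) (f : ℤ → ℂ) (n : ℤ) (k : ℕ) : ℂ :=
  ∑ i ∈ Finset.range (k + 1),
    f (n + (i : ℤ)) /
      ∏ j ∈ (Finset.range (k + 1)).erase i,
        ((lam (n + (i : ℤ)) - lam (n + (j : ℤ)) : ℝ) : ℂ)

/-- Divided difference of values `v` at (distinct) points `x`. -/
noncomputable def ddPts {m : ℕ} (x : Fin m → ℝ) (v : Fin m → ℂ) : ℂ :=
  ∑ i, v i / ∏ j ∈ Finset.univ.erase i, ((x i - x j : ℝ) : ℂ)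

/-- `F` is of class `W^r` on `[a,b]` with `r`-th derivative `G`. -/
def ClassW (r : ℕ) (a b : ℝ) (F G : ℝ → ℂ) : Prop :=
  ContDiffOn ℝ (r - 1 : ℕ) F (Set.Icc a b) ∧ MeasureTheory.IntegrableOn G (Set.Icc a b) ∧
  ∀ x y : ℝ, a ≤ x → x ≤ y → y ≤ b →
    iteratedDerivWithin (r - 1) F (Set.Icc a b) y -
      iteratedDerivWithin (r - 1) F (Set.Icc a b) x = ∫ t in x..y, G t

/-- `‖f‖_{eq,L}^p`, valued in `[0,∞]`. -/
noncomputable def eqLp (r : ℕ) (p : ℝ) (lam : ℤ → ℝ) (f : ℤ → ℂ) : ℝ≥0∞ :=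
  ∑' n : ℤ, ENNReal.ofReal ((lam (n + (r : ℤ)) - lam n) * ‖ddiv lam f n r‖ ^ p)

/-- `‖f‖_{eq,W}^p`, valued in `[0,∞]`. -/
noncomputable def eqWp (r : ℕ) (p : ℝ) (lam : ℤ → ℝ) (f : ℤ → ℂ) : ℝ≥0∞ :=
  eqLp r p lam f +
    ∑ j ∈ Finset.range r, ∑' n : ℤ,
      ENNReal.ofReal ((lam (n + (r : ℤ)) - lam n) ^ ((j : ℝ) * p + 1) *
        ‖ddiv lam f n j‖ ^ p)

/-- The cubic `q(x) = 4(x² - x³)`. -/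
noncomputable def qcub : ℝ → ℝ := fun x => 4 * (x ^ 2 - x ^ 3)

/-- `α_n(f) = (h_n f[λ_{n-1},λ_n] + h_{n-1} f[λ_n,λ_{n+1}])/(h_{n-1}+h_n)`. -/
noncomputable def alphaN (lam : ℤ → ℝ) (f : ℤ → ℂ) (n : ℤ) : ℂ :=
  (((lam (n + 1) - lam n : ℝ) : ℂ) * dd1 lam f (n - 1) +
      ((lam n - lam (n - 1) : ℝ) : ℂ) * dd1 lam f n) /
    ((lam (n + 1) - lam (n - 1) : ℝ) : ℂ)

/-- The formula for `Φ₁ f` on `[λ_n, λ_{n+1}]`. -/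
noncomputable def phi1P (lam : ℤ → ℝ) (f : ℤ → ℂ) (n : ℤ) (x : ℝ) : ℂ :=
  f n * (((lam (n + 1) - x) / (lam (n + 1) - lam n) : ℝ) : ℂ) +
    f (n + 1) * (((x - lam n) / (lam (n + 1) - lam n) : ℝ) : ℂ)

/-- The formula for `Φ₂ f` on `[μ_{n-1}, λ_n]`. -/
noncomputable def phi2L (lam : ℤ → ℝ) (f : ℤ → ℂ) (n : ℤ) (x : ℝ) : ℂ :=
  f n + alphaN lam f n * ((x - lam n : ℝ) : ℂ) +
    (((lam n - lam (n - 1)) ^ 2 : ℝ) : ℂ) * dd2 lam f (n - 1) *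
      ((qcub ((lam n - x) / (lam n - lam (n - 1))) : ℝ) : ℂ)

/-- The formula for `Φ₂ f` on `[λ_n, μ_n]`. -/
noncomputable def phi2R (lam : ℤ → ℝ) (f : ℤ → ℂ) (n : ℤ) (x : ℝ) : ℂ :=
  f n + alphaN lam f n * ((x - lam n : ℝ) : ℂ) +
    (((lam (n + 1) - lam n) ^ 2 : ℝ) : ℂ) * dd2 lam f (n - 1) *
      ((qcub ((x - lam n) / (lam (n + 1) - lam n)) : ℝ) : ℂ)


/-!
Write `h_n = λ_{n+1} - λ_n`. The simplified norm is bounded by the full one termwise: its only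
new term `(λ_{n+1} - λ_{n-1}) |f_n|^p` is controlled through
`f_n = f_{n-1} + h_{n-1} f[λ_{n-1},λ_n]`.

For the converse, since the steps are at most `K`, every index `n` starts a window `[λ_n, λ_b]`
of length between `1` and `1 + K`. Averaging the discrete fundamental theorem of calculus over
such a window bounds `|f_n|^p` by window sums of `(λ_{i+1} - λ_{i-1}) |f_i|^p` and
`h_i |f[λ_i,λ_{i+1}]|^p`; averaging over a second, adjacent window bounds
`|f[λ_k,λ_{k+1}]|^p` by `|f_k|^p` and window sums of the terms of the simplified norm. Every point
lies in windows of boundedly many indices, so summing these local bounds costs only a factor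
depending on `K`.
-/

open Finset

theorem rpow_sum_mul_le {ι : Type*} (s : Finset ι) {p τ : ℝ} (hp : 1 ≤ p) {a x : ι → ℝ}
    (ha : ∀ i, 0 ≤ a i) (hx : ∀ i, 0 ≤ x i) (hτ : ∑ i ∈ s, a i ≤ τ) :
    (∑ i ∈ s, a i * x i) ^ p ≤ τ ^ (p - 1) * ∑ i ∈ s, a i * x i ^ p := by
  have hp0 : 0 < p := by linarith
  have hA : 0 ≤ ∑ i ∈ s, a i := sum_nonneg fun i _ => ha i
  have hS : 0 ≤ ∑ i ∈ s, a i * x i ^ p :=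
    sum_nonneg fun i _ => mul_nonneg (ha i) (Real.rpow_nonneg (hx i) p)
  calc (∑ i ∈ s, a i * x i) ^ p
      ≤ ((∑ i ∈ s, a i) ^ (1 - p⁻¹) * (∑ i ∈ s, a i * x i ^ p) ^ p⁻¹) ^ p :=
        Real.rpow_le_rpow (sum_nonneg fun i _ => mul_nonneg (ha i) (hx i))
          (Real.inner_le_weight_mul_Lp_of_nonneg s hp a x ha hx) hp0.le
    _ = (∑ i ∈ s, a i) ^ (p - 1) * ∑ i ∈ s, a i * x i ^ p := by
        rw [Real.mul_rpow (by positivity) (by positivity), ← Real.rpow_mul hA,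
          ← Real.rpow_mul hS, inv_mul_cancel₀ hp0.ne', Real.rpow_one, sub_mul, one_mul,
          inv_mul_cancel₀ hp0.ne']
    _ ≤ τ ^ (p - 1) * ∑ i ∈ s, a i * x i ^ p := by
        gcongr

theorem add_rpow_le_two_mul {p x y : ℝ} (hp : 1 ≤ p) (hx : 0 ≤ x) (hy : 0 ≤ y) :
    (x + y) ^ p ≤ 2 ^ (p - 1) * (x ^ p + y ^ p) := by
  simpa [Fin.sum_univ_two] using
    rpow_sum_mul_le univ hp (a := fun _ : Fin 2 => 1) (x := ![x, y]) (fun _ => zero_le_one)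
      (fun i => by fin_cases i <;> simpa) (by norm_num)

theorem le_sum_mul_of_forall_le {ι : Type*} {s : Finset ι} {a z : ι → ℝ} {x : ℝ} (hx : 0 ≤ x)
    (ha : ∀ i ∈ s, 0 ≤ a i) (hs : 1 ≤ ∑ i ∈ s, a i) (h : ∀ i ∈ s, x ≤ z i) :
    x ≤ ∑ i ∈ s, a i * z i :=
  calc x ≤ (∑ i ∈ s, a i) * x := le_mul_of_one_le_left hx hs
    _ = ∑ i ∈ s, a i * x := sum_mul _ _ _
    _ ≤ ∑ i ∈ s, a i * z i := sum_le_sum fun i hi => mul_le_mul_of_nonneg_left (h i hi) (ha i hi)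

theorem rpow_le_sum_mul_add_of_forall_le {ι : Type*} {s : Finset ι} {p M x z : ℝ} {a y : ι → ℝ}
    (hp : 1 ≤ p) (ha : ∀ i, 0 ≤ a i) (hy : ∀ i, 0 ≤ y i) (hx : 0 ≤ x) (hz : 0 ≤ z)
    (h1 : 1 ≤ ∑ i ∈ s, a i) (hM : ∑ i ∈ s, a i ≤ M) (h : ∀ i ∈ s, x ≤ y i + z) :
    x ^ p ≤ 2 ^ (p - 1) * (∑ i ∈ s, a i * y i ^ p + M * z ^ p) :=
  calc x ^ p ≤ ∑ i ∈ s, a i * (2 ^ (p - 1) * (y i ^ p + z ^ p)) :=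
        le_sum_mul_of_forall_le (by positivity) (fun i _ => ha i) h1 fun i hi =>
          (Real.rpow_le_rpow hx (h i hi) (by linarith)).trans (add_rpow_le_two_mul hp (hy i) hz)
    _ = 2 ^ (p - 1) * (∑ i ∈ s, a i * y i ^ p + (∑ i ∈ s, a i) * z ^ p) := by
        rw [mul_add, mul_sum, sum_mul, mul_sum, ← sum_add_distrib]
        exact sum_congr rfl fun i _ => by ring
    _ ≤ 2 ^ (p - 1) * (∑ i ∈ s, a i * y i ^ p + M * z ^ p) := by gcongr

theorem mul_rpow_mul_sum_le {ι : Type*} (s : Finset ι) {p M : ℝ} (hp : 1 ≤ p) {a x : ι → ℝ}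
    (ha : ∀ i, 0 ≤ a i) (hx : ∀ i, 0 ≤ x i) (hM : 0 ≤ M) (hs : ∑ i ∈ s, a i ≤ 2 * M) :
    M * (M * ∑ i ∈ s, a i * x i) ^ p ≤ (2 * M ^ 2) ^ p * ∑ i ∈ s, a i * x i ^ p :=
  calc M * (M * ∑ i ∈ s, a i * x i) ^ p = M ^ p * (M * (∑ i ∈ s, a i * x i) ^ p) := by
        rw [Real.mul_rpow hM (sum_nonneg fun i _ => mul_nonneg (ha i) (hx i))]
        ring
    _ ≤ M ^ p * ((2 * M) * ((2 * M) ^ (p - 1) * ∑ i ∈ s, a i * x i ^ p)) :=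
        mul_le_mul_of_nonneg_left (mul_le_mul (by linarith) (rpow_sum_mul_le s hp ha hx hs)
          (Real.rpow_nonneg (sum_nonneg fun i _ => mul_nonneg (ha i) (hx i)) p) (by linarith))
          (by positivity)
    _ = (2 * M ^ 2) ^ p * ∑ i ∈ s, a i * x i ^ p := by
        rw [← mul_assoc (2 * M), mul_comm (2 * M), ← Real.rpow_add_one' (by positivity)
          (by linarith), sub_add_cancel, ← mul_assoc, ← Real.mul_rpow hM (by positivity)]
        ring_nf

theorem sum_Ico_sub_int {M : Type*} [AddCommGroup M] (g : ℤ → M) {a b : ℤ} (hab : a ≤ b) :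
    ∑ j ∈ Ico a b, (g (j + 1) - g j) = g b - g a := by
  induction b, hab using Int.leInduction with
  | base => simp
  | succ b _ ih =>
    rw [show Ico a (b + 1) = insert b (Ico a b) by ext; simp; omega, sum_insert (by simp), ih]
    abel

theorem sum_Ioc_sub_int {M : Type*} [AddCommGroup M] (g : ℤ → M) {a b : ℤ} (hab : a ≤ b) :
    ∑ i ∈ Ioc a b, (g i - g (i - 1)) = g b - g a := by
  induction b, hab using Int.leInduction with
  | base => simp
  | succ b hab ih =>
    rw [show Ioc a (b + 1) = insert (b + 1) (Ioc a b) by ext; simp; omega,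
      sum_insert (by simp), ih, add_sub_cancel_right]
    abel

section PowerBounds

variable {X Y Z : ℝ≥0∞} {a b p : ℝ}

theorem le_ofReal_rpow_mul_trans (ha : 0 ≤ a) (hp : 0 ≤ p)
    (h₁ : X ≤ ENNReal.ofReal a ^ p * Y) (h₂ : Y ≤ ENNReal.ofReal b ^ p * Z) :
    X ≤ ENNReal.ofReal (a * b) ^ p * Z :=
  calc X ≤ ENNReal.ofReal a ^ p * (ENNReal.ofReal b ^ p * Z) := h₁.trans (by gcongr)
    _ = _ := by rw [ENNReal.ofReal_mul ha, ENNReal.mul_rpow_of_nonneg _ _ hp, mul_assoc]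

theorem add_le_ofReal_rpow_mul (ha : 0 ≤ a) (hb : 0 ≤ b) (hp : 1 ≤ p)
    (h₁ : X ≤ ENNReal.ofReal a ^ p * Z) (h₂ : Y ≤ ENNReal.ofReal b ^ p * Z) :
    X + Y ≤ ENNReal.ofReal (a + b) ^ p * Z :=
  calc X + Y ≤ (ENNReal.ofReal a ^ p + ENNReal.ofReal b ^ p) * Z := by rw [add_mul]; gcongr
    _ ≤ _ := by
      rw [ENNReal.ofReal_add ha hb]
      gcongr
      exact ENNReal.add_rpow_le_rpow_add _ _ hp

theorem ofReal_mul_le_ofReal_rpow_mul (ha : 1 ≤ a) (hp : 1 ≤ p) (X : ℝ≥0∞) :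
    ENNReal.ofReal a * X ≤ ENNReal.ofReal a ^ p * X := by
  rw [ENNReal.ofReal_rpow_of_nonneg (by linarith) (by linarith)]
  gcongr
  exact Real.self_le_rpow_of_one_le ha hp

theorem rpow_one_div_le_of_le_rpow_mul (hp : 0 < p) (h : X ≤ ENNReal.ofReal a ^ p * Y) :
    X ^ (1 / p) ≤ ENNReal.ofReal a * Y ^ (1 / p) :=
  calc X ^ (1 / p) ≤ (ENNReal.ofReal a ^ p * Y) ^ (1 / p) := by gcongr
    _ = _ := by
      rw [ENNReal.mul_rpow_of_nonneg _ _ (by positivity), ← ENNReal.rpow_mul,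
        mul_one_div_cancel hp.ne', ENNReal.rpow_one]

end PowerBounds

section LocalEstimates

variable {lam : ℤ → ℝ} {f : ℤ → ℂ} {p : ℝ}

theorem sub_eq_mul_dd1 (hm : StrictMono lam) (n : ℤ) :
    f (n + 1) - f n = ((lam (n + 1) - lam n : ℝ) : ℂ) * dd1 lam f n := by
  rw [dd1, mul_div_cancel₀]
  exact_mod_cast (sub_pos.2 (hm (lt_add_one n))).ne'

theorem dd1_add_one_sub (hm : StrictMono lam) (n : ℤ) :
    dd1 lam f (n + 1) - dd1 lam f n = ((lam (n + 2) - lam n : ℝ) : ℂ) * dd2 lam f n := by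
  rw [dd2, mul_div_cancel₀]
  exact_mod_cast (sub_pos.2 (hm (by omega : n < n + 2))).ne'

theorem norm_sub_le_sum_of_sub_eq_mul {g e : ℤ → ℂ} {d : ℤ → ℝ} (hd : ∀ j, 0 ≤ d j)
    (hg : ∀ j, g (j + 1) - g j = (d j : ℂ) * e j) {a b : ℤ} (hab : a ≤ b) :
    ‖g b - g a‖ ≤ ∑ j ∈ Ico a b, d j * ‖e j‖ := by
  rw [← sum_Ico_sub_int g hab]
  refine (norm_sum_le _ _).trans (le_of_eq (sum_congr rfl fun j _ => ?_))
  rw [hg, norm_mul, Complex.norm_real, Real.norm_of_nonneg (hd j)]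

theorem norm_rpow_le_of_window (hp : 1 ≤ p) (hm : StrictMono lam) {M : ℝ} {n b : ℤ}
    (h1 : 1 ≤ lam b - lam n) (hM : lam b - lam n ≤ M) :
    ‖f n‖ ^ p ≤ (2 * M) ^ p * (∑ i ∈ Ioc n b, (lam i - lam (i - 1)) * ‖f i‖ ^ p +
      ∑ j ∈ Ico n b, (lam (j + 1) - lam j) * ‖dd1 lam f j‖ ^ p) := by
  have hp0 : 0 ≤ p := by linarith
  have hM1 : 1 ≤ M := h1.trans hM
  have hnb : n < b := hm.lt_iff_lt.1 (by linarith)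
  have hgap : ∀ i, 0 ≤ lam (i + 1) - lam i := fun i => sub_nonneg.2 (hm.monotone (by omega))
  have hgap' : ∀ i, 0 ≤ lam i - lam (i - 1) := fun i => sub_nonneg.2 (hm.monotone (by omega))
  set R := ∑ j ∈ Ico n b, (lam (j + 1) - lam j) * ‖dd1 lam f j‖
  have hR0 : 0 ≤ R := sum_nonneg fun j _ => mul_nonneg (hgap j) (norm_nonneg _)
  have hpt : ∀ i ∈ Ioc n b, ‖f n‖ ≤ ‖f i‖ + R := fun i hi =>
    calc ‖f n‖ ≤ ‖f i‖ + ‖f i - f n‖ := by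
          simpa [norm_sub_rev] using norm_le_norm_add_norm_sub' (f n) (f i)
      _ ≤ ‖f i‖ + R := by
          gcongr
          exact (norm_sub_le_sum_of_sub_eq_mul hgap (sub_eq_mul_dd1 hm) (mem_Ioc.1 hi).1.le).trans
            (sum_le_sum_of_subset_of_nonneg (Ico_subset_Ico_right (mem_Ioc.1 hi).2)
              fun j _ _ => mul_nonneg (hgap j) (norm_nonneg _))
  set Sf := ∑ i ∈ Ioc n b, (lam i - lam (i - 1)) * ‖f i‖ ^ p
  set Sd := ∑ j ∈ Ico n b, (lam (j + 1) - lam j) * ‖dd1 lam f j‖ ^ p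
  have hSf : 0 ≤ Sf := sum_nonneg fun i _ => mul_nonneg (hgap' i) (by positivity)
  have hSd : 0 ≤ Sd := sum_nonneg fun j _ => mul_nonneg (hgap j) (by positivity)
  have hR : R ^ p ≤ M ^ (p - 1) * Sd :=
    rpow_sum_mul_le _ hp hgap (fun _ => norm_nonneg _) (by rwa [sum_Ico_sub_int lam hnb.le])
  calc ‖f n‖ ^ p ≤ 2 ^ (p - 1) * (Sf + M * R ^ p) :=
        rpow_le_sum_mul_add_of_forall_le hp hgap' (fun _ => norm_nonneg _) (norm_nonneg _) hR0
          (by rwa [sum_Ioc_sub_int lam hnb.le]) (by rwa [sum_Ioc_sub_int lam hnb.le]) hpt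
    _ ≤ 2 ^ (p - 1) * (Sf + M ^ p * Sd) := by
        gcongr 2 ^ (p - 1) * (Sf + ?_)
        calc M * R ^ p ≤ M * (M ^ (p - 1) * Sd) := by gcongr
          _ = M ^ p * Sd := by
              rw [Real.rpow_sub_one (by linarith)]
              field_simp
    _ ≤ 2 ^ p * (M ^ p * Sf + M ^ p * Sd) := by
        gcongr ?_ * (?_ + _)
        · exact Real.rpow_le_rpow_of_exponent_le one_le_two (by linarith)
        · exact le_mul_of_one_le_left hSf (Real.one_le_rpow hM1 hp0)
    _ = (2 * M) ^ p * (Sf + Sd) := by rw [Real.mul_rpow zero_le_two (by linarith)]; ring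

theorem sub_mul_norm_dd1_le (hm : StrictMono lam) {k i : ℤ} (hki : k ≤ i) {σ : ℝ}
    (hσ : ∀ j ∈ Ico k i, ‖dd1 lam f j - dd1 lam f k‖ ≤ σ) :
    (lam i - lam k) * ‖dd1 lam f k‖ ≤ ‖f i - f k‖ + (lam i - lam k) * σ := by
  have hgap : ∀ j, 0 ≤ lam (j + 1) - lam j := fun j => sub_nonneg.2 (hm.monotone (by omega))
  have hid : ((lam i - lam k : ℝ) : ℂ) * dd1 lam f k = (f i - f k) -
      ∑ j ∈ Ico k i, ((lam (j + 1) - lam j : ℝ) : ℂ) * (dd1 lam f j - dd1 lam f k) := by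
    rw [← sum_Ico_sub_int lam hki, ← sum_Ico_sub_int f hki, Complex.ofReal_sum, sum_mul]
    simp only [sub_eq_mul_dd1 hm, mul_sub, sum_sub_distrib]
    ring
  calc (lam i - lam k) * ‖dd1 lam f k‖
      = ‖((lam i - lam k : ℝ) : ℂ) * dd1 lam f k‖ := by
        rw [norm_mul, Complex.norm_real, Real.norm_of_nonneg (sub_nonneg.2 (hm.monotone hki))]
    _ ≤ ‖f i - f k‖ + ∑ j ∈ Ico k i, (lam (j + 1) - lam j) * σ := by
        rw [hid]
        refine (norm_sub_le _ _).trans (add_le_add_right ((norm_sum_le _ _).trans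
          (sum_le_sum fun j hj => ?_)) _)
        rw [norm_mul, Complex.norm_real, Real.norm_of_nonneg (hgap j)]
        exact mul_le_mul_of_nonneg_left (hσ j hj) (hgap j)
    _ = ‖f i - f k‖ + (lam i - lam k) * σ := by rw [← sum_mul, sum_Ico_sub_int lam hki]

theorem norm_dd1_le_of_one_le_sub (hm : StrictMono lam) {M : ℝ} {k i : ℤ}
    (h1 : 1 ≤ lam i - lam k) (hM : lam i - lam k ≤ M) :
    ‖dd1 lam f k‖ ≤ ‖f i‖ +
      (‖f k‖ + M * ∑ m ∈ Ico k (i - 1), (lam (m + 2) - lam m) * ‖dd2 lam f m‖) := by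
  have hki : k < i := hm.lt_iff_lt.1 (by linarith)
  have hw : ∀ m, 0 ≤ lam (m + 2) - lam m := fun m => sub_nonneg.2 (hm.monotone (by omega))
  have hσ : ∀ j ∈ Ico k i, ‖dd1 lam f j - dd1 lam f k‖ ≤
      ∑ m ∈ Ico k (i - 1), (lam (m + 2) - lam m) * ‖dd2 lam f m‖ := fun j hj =>
    (norm_sub_le_sum_of_sub_eq_mul hw (dd1_add_one_sub hm) (mem_Ico.1 hj).1).trans
      (sum_le_sum_of_subset_of_nonneg (Ico_subset_Ico_right (by grind))
        fun m _ _ => mul_nonneg (hw m) (norm_nonneg _))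
  calc ‖dd1 lam f k‖ ≤ (lam i - lam k) * ‖dd1 lam f k‖ :=
        le_mul_of_one_le_left (norm_nonneg _) h1
    _ ≤ ‖f i - f k‖ + (lam i - lam k) *
          ∑ m ∈ Ico k (i - 1), (lam (m + 2) - lam m) * ‖dd2 lam f m‖ :=
        sub_mul_norm_dd1_le hm hki.le hσ
    _ ≤ ‖f i‖ + (‖f k‖ + M * ∑ m ∈ Ico k (i - 1), (lam (m + 2) - lam m) * ‖dd2 lam f m‖) := by
        rw [← add_assoc]
        gcongr
        · exact norm_sub_le _ _
        · exact sum_nonneg fun m _ => mul_nonneg (hw m) (norm_nonneg _)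

theorem sum_Ico_sub_two_le (hm : Monotone lam) {a b : ℤ} (hab : a < b) :
    ∑ m ∈ Ico a (b - 1), (lam (m + 2) - lam m) ≤ 2 * (lam b - lam a) := by
  have hsplit : ∀ m, lam (m + 2) - lam m =
      (lam (m + 1) - lam m) + (lam (m + 1 + 1) - lam (m + 1)) := fun m => by ring_nf
  rw [sum_congr rfl fun m _ => hsplit m, sum_add_distrib, sum_Ico_sub_int lam (by omega),
    sum_Ico_sub_int (fun m => lam (m + 1)) (by omega), sub_add_cancel]
  linarith [hm (by omega : b - 1 ≤ b), hm (by omega : a ≤ a + 1)]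

theorem norm_dd1_rpow_le_sum_add_rpow (hp : 1 ≤ p) (hm : StrictMono lam) {M : ℝ} {k b b₂ : ℤ}
    (h1 : 1 ≤ lam b - lam k) (h2 : 1 ≤ lam b₂ - lam b) (hM : lam b₂ - lam k ≤ M) :
    ‖dd1 lam f k‖ ^ p ≤ 2 ^ (p - 1) * (∑ i ∈ Ioc b b₂, (lam i - lam (i - 1)) * ‖f i‖ ^ p +
      M * (‖f k‖ + M * ∑ m ∈ Ico k (b₂ - 1), (lam (m + 2) - lam m) * ‖dd2 lam f m‖) ^ p) := by
  have hkb : k < b := hm.lt_iff_lt.1 (by linarith)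
  have hbb : b < b₂ := hm.lt_iff_lt.1 (by linarith)
  have hw : ∀ m, 0 ≤ lam (m + 2) - lam m := fun m => sub_nonneg.2 (hm.monotone (by omega))
  have hSig : 0 ≤ ∑ m ∈ Ico k (b₂ - 1), (lam (m + 2) - lam m) * ‖dd2 lam f m‖ :=
    sum_nonneg fun m _ => mul_nonneg (hw m) (norm_nonneg _)
  refine rpow_le_sum_mul_add_of_forall_le hp (fun i => sub_nonneg.2 (hm.monotone (by omega)))
    (fun _ => norm_nonneg _) (norm_nonneg _) (add_nonneg (norm_nonneg _)
      (mul_nonneg (by linarith) hSig)) (by rw [sum_Ioc_sub_int lam hbb.le]; linarith)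
    (by rw [sum_Ioc_sub_int lam hbb.le]; linarith [hm.monotone hkb.le]) fun i hi => ?_
  obtain ⟨hbi, hib⟩ := mem_Ioc.1 hi
  refine (norm_dd1_le_of_one_le_sub (M := M) hm (by linarith [hm.monotone hbi.le])
    (by linarith [hm.monotone hib])).trans (add_le_add le_rfl (add_le_add le_rfl
      (mul_le_mul_of_nonneg_left ?_ (by linarith))))
  exact sum_le_sum_of_subset_of_nonneg (Ico_subset_Ico_right (by omega))
    fun m _ _ => mul_nonneg (hw m) (norm_nonneg _)

theorem norm_dd1_rpow_le_of_window (hp : 1 ≤ p) (hm : StrictMono lam) {M : ℝ} {k b b₂ : ℤ}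
    (h1 : 1 ≤ lam b - lam k) (h2 : 1 ≤ lam b₂ - lam b) (hM : lam b₂ - lam k ≤ M) :
    ‖dd1 lam f k‖ ^ p ≤ (8 * M ^ 2) ^ p * (‖f k‖ ^ p +
      ∑ i ∈ Ioc b b₂, (lam i - lam (i - 1)) * ‖f i‖ ^ p +
      ∑ m ∈ Ico k (b₂ - 1), (lam (m + 2) - lam m) * ‖dd2 lam f m‖ ^ p) := by
  have hkb : k < b := hm.lt_iff_lt.1 (by linarith)
  have hbb : b < b₂ := hm.lt_iff_lt.1 (by linarith)
  have hM1 : 1 ≤ M := by linarith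
  have hw : ∀ m, 0 ≤ lam (m + 2) - lam m := fun m => sub_nonneg.2 (hm.monotone (by omega))
  set Sig := ∑ m ∈ Ico k (b₂ - 1), (lam (m + 2) - lam m) * ‖dd2 lam f m‖
  set Sf := ∑ i ∈ Ioc b b₂, (lam i - lam (i - 1)) * ‖f i‖ ^ p
  set S2 := ∑ m ∈ Ico k (b₂ - 1), (lam (m + 2) - lam m) * ‖dd2 lam f m‖ ^ p
  have hSf0 : 0 ≤ Sf :=
    sum_nonneg fun i _ => mul_nonneg (sub_nonneg.2 (hm.monotone (by omega))) (by positivity)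
  have hS20 : 0 ≤ S2 := sum_nonneg fun m _ => mul_nonneg (hw m) (by positivity)
  have hz : 0 ≤ M * Sig :=
    mul_nonneg (by linarith) (sum_nonneg fun m _ => mul_nonneg (hw m) (norm_nonneg _))
  have hMSig : M * (M * Sig) ^ p ≤ (2 * M ^ 2) ^ p * S2 :=
    mul_rpow_mul_sum_le _ hp hw (fun _ => norm_nonneg _) (by linarith)
      ((sum_Ico_sub_two_le hm.monotone (hkb.trans hbb)).trans (by linarith))
  have hC : M ≤ (2 * M ^ 2) ^ p :=
    (by nlinarith : M ≤ 2 * M ^ 2).trans (Real.self_le_rpow_of_one_le (by nlinarith) hp)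
  have h2p : 1 ≤ (2 : ℝ) ^ (p - 1) := Real.one_le_rpow one_le_two (by linarith)
  calc ‖dd1 lam f k‖ ^ p ≤ 2 ^ (p - 1) * (Sf + M * (‖f k‖ + M * Sig) ^ p) :=
        norm_dd1_rpow_le_sum_add_rpow hp hm h1 h2 hM
    _ ≤ 2 ^ (p - 1) * (2 ^ (p - 1) * ((2 * M ^ 2) ^ p * (‖f k‖ ^ p + Sf + S2))) := by
        gcongr 2 ^ (p - 1) * ?_
        have hsplit : M * (‖f k‖ + M * Sig) ^ p ≤
            2 ^ (p - 1) * (M * ‖f k‖ ^ p + (2 * M ^ 2) ^ p * S2) := by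
          calc _ ≤ M * (2 ^ (p - 1) * (‖f k‖ ^ p + (M * Sig) ^ p)) := by
                gcongr
                exact add_rpow_le_two_mul hp (norm_nonneg _) hz
            _ ≤ _ := by nlinarith
        have hSf : Sf ≤ 2 ^ (p - 1) * ((2 * M ^ 2) ^ p * Sf) :=
          (le_mul_of_one_le_left hSf0 (Real.one_le_rpow (by nlinarith) (by linarith))).trans
            (le_mul_of_one_le_left (mul_nonneg (by positivity) hSf0) h2p)
        have hfk := mul_le_mul_of_nonneg_left
          (mul_le_mul_of_nonneg_right hC (by positivity : 0 ≤ ‖f k‖ ^ p))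
          (by positivity : (0 : ℝ) ≤ 2 ^ (p - 1))
        linarith
    _ ≤ 4 ^ p * ((2 * M ^ 2) ^ p * (‖f k‖ ^ p + Sf + S2)) := by
        rw [← mul_assoc, ← Real.mul_rpow zero_le_two zero_le_two]
        refine mul_le_mul_of_nonneg_right ?_ (mul_nonneg (by positivity) (by positivity))
        calc ((2 : ℝ) * 2) ^ (p - 1) ≤ (2 * 2) ^ p :=
              Real.rpow_le_rpow_of_exponent_le (by norm_num) (by linarith)
          _ = 4 ^ p := by norm_num
    _ = (8 * M ^ 2) ^ p * (‖f k‖ ^ p + Sf + S2) := by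
        rw [← mul_assoc, ← Real.mul_rpow (by norm_num) (by positivity)]
        ring_nf

theorem sum_Ioc_add_sum_Ico_le_sum_Icc (hm : Monotone lam) {g u : ℤ → ℝ} (hg : ∀ i, 0 ≤ g i)
    (hu : ∀ i, 0 ≤ u i) {a b a' b' c d : ℤ} (h : Ioc a b ⊆ Icc c d) (h' : Ico a' b' ⊆ Icc c d) :
    ∑ i ∈ Ioc a b, (lam i - lam (i - 1)) * g i + ∑ i ∈ Ico a' b', u i ≤
      ∑ i ∈ Icc c d, ((lam (i + 1) - lam (i - 1)) * g i + u i) := by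
  have hv : ∀ i, 0 ≤ lam (i + 1) - lam (i - 1) := fun i => sub_nonneg.2 (hm (by omega))
  rw [sum_add_distrib]
  refine add_le_add ((sum_le_sum fun i _ => ?_).trans
    (sum_le_sum_of_subset_of_nonneg h fun i _ _ => mul_nonneg (hv i) (hg i)))
    (sum_le_sum_of_subset_of_nonneg h' fun i _ _ => hu i)
  exact mul_le_mul_of_nonneg_right (by linarith [hm (by omega : i ≤ i + 1)]) (hg i)

end LocalEstimates

section Summation

variable {lam : ℤ → ℝ}

theorem tsum_indicator_gap_le (hm : Monotone lam) (a b : ℝ) :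
    ∑' m, {m | a ≤ lam m ∧ lam (m + 1) ≤ b}.indicator
      (fun m => ENNReal.ofReal (lam (m + 1) - lam m)) m ≤ ENNReal.ofReal (b - a) := by
  set S := {m | a ≤ lam m ∧ lam (m + 1) ≤ b}
  have hdisj : Pairwise (Function.onFun Disjoint fun m : S => Set.Ico (lam m) (lam (m + 1))) := by
    have := hm.pairwise_disjoint_on_Ico_succ
    simp only [Order.succ_eq_add_one] at this
    exact this.comp_of_injective Subtype.val_injective
  calc ∑' m, S.indicator (fun m => ENNReal.ofReal (lam (m + 1) - lam m)) m
      = ∑' m : S, volume (Set.Ico (lam m) (lam (m + 1))) := by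
        simp only [Real.volume_Ico]
        exact (_root_.tsum_subtype S _).symm
    _ = volume (⋃ m : S, Set.Ico (lam m) (lam (m + 1))) :=
        (measure_iUnion hdisj fun _ => measurableSet_Ico).symm
    _ ≤ volume (Set.Icc a b) :=
        measure_mono (Set.iUnion_subset fun m => Set.Ico_subset_Icc_self.trans
          (Set.Icc_subset_Icc m.2.1 m.2.2))
    _ = ENNReal.ofReal (b - a) := Real.volume_Icc

theorem sub_le_mul_of_gap_le {K : ℝ} (hgap : ∀ n, lam (n + 1) - lam n ≤ K) (n : ℤ) (r : ℕ) :
    lam (n + r) - lam n ≤ r * K := by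
  induction r with
  | zero => simp
  | succ r ih =>
    have := hgap (n + r)
    push_cast
    rw [← add_assoc]
    linarith

theorem tsum_indicator_sub_le (hm : Monotone lam) (r : ℕ) (a b : ℝ) :
    ∑' n, {n | a ≤ lam n ∧ lam (n + r) ≤ b}.indicator
      (fun n => ENNReal.ofReal (lam (n + r) - lam n)) n ≤ r * ENNReal.ofReal (b - a) := by
  set g := {m | a ≤ lam m ∧ lam (m + 1) ≤ b}.indicator
    (fun m => ENNReal.ofReal (lam (m + 1) - lam m)) with hg
  have hpt : ∀ n, {n | a ≤ lam n ∧ lam (n + r) ≤ b}.indicator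
      (fun n => ENNReal.ofReal (lam (n + r) - lam n)) n ≤ ∑ j ∈ range r, g (n + j) := by
    intro n
    by_cases hn : a ≤ lam n ∧ lam (n + r) ≤ b
    · have hsum : lam (n + r) - lam n = ∑ j ∈ range r, (lam (n + j + 1) - lam (n + j)) := by
        have h := sum_range_sub (fun j : ℕ => lam (n + j)) r
        simp only [Nat.cast_add, Nat.cast_one, Nat.cast_zero, add_zero, ← add_assoc] at h
        exact h.symm
      rw [Set.indicator_of_mem (show n ∈ {n : ℤ | a ≤ lam n ∧ lam (n + r) ≤ b} from hn), hsum,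
        ENNReal.ofReal_sum_of_nonneg fun j _ => sub_nonneg.2 (hm (by omega))]
      refine sum_le_sum fun j hj => ?_
      rw [hg, Set.indicator_of_mem
        (show n + j ∈ {m : ℤ | a ≤ lam m ∧ lam (m + 1) ≤ b} from ⟨?_, ?_⟩)]
      · exact hn.1.trans (hm (by omega))
      · exact (hm (by simp at hj; omega)).trans hn.2
    · simp [Set.indicator_of_notMem, hn]
  calc _ ≤ ∑' n, ∑ j ∈ range r, g (n + j) := ENNReal.tsum_le_tsum hpt
    _ = ∑ j ∈ range r, ∑' n, g (n + j) :=
        Summable.tsum_finsetSum fun _ _ => ENNReal.summable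
    _ = ∑ j ∈ range r, ∑' m, g m := sum_congr rfl fun j _ => (Equiv.addRight (j : ℤ)).tsum_eq g
    _ ≤ ∑ j ∈ range r, ENNReal.ofReal (b - a) :=
        sum_le_sum fun _ _ => tsum_indicator_gap_le hm a b
    _ = r * ENNReal.ofReal (b - a) := by simp

theorem tsum_mul_sum_le {ι κ : Type*} (u : ι → ℝ≥0∞) (t : κ → ℝ≥0∞) (s : ι → Finset κ)
    {C : ℝ≥0∞} (hC : ∀ i, ∑' n, {n | i ∈ s n}.indicator u n ≤ C) :
    ∑' n, u n * ∑ i ∈ s n, t i ≤ C * ∑' i, t i := by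
  calc ∑' n, u n * ∑ i ∈ s n, t i
      = ∑' n, ∑' i, {n | i ∈ s n}.indicator u n * t i := by
        refine tsum_congr fun n => ?_
        rw [mul_sum, sum_eq_tsum_indicator]
        exact tsum_congr fun i => by by_cases hi : i ∈ s n <;> simp [hi]
    _ = ∑' i, (∑' n, {n | i ∈ s n}.indicator u n) * t i := by
        rw [ENNReal.tsum_comm]
        exact tsum_congr fun i => ENNReal.tsum_mul_right
    _ ≤ ∑' i, C * t i := ENNReal.tsum_le_tsum fun i => by gcongr; exact hC i
    _ = C * ∑' i, t i := ENNReal.tsum_mul_left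

theorem tsum_sub_mul_sum_Icc_le (hm : Monotone lam) {K c : ℝ}
    (hgap : ∀ n, lam (n + 1) - lam n ≤ K) (r : ℕ) (e : ℤ → ℤ) (he : ∀ n, lam (e n) - lam n ≤ c)
    (t : ℤ → ℝ≥0∞) :
    ∑' n, ENNReal.ofReal (lam (n + r) - lam n) * ∑ i ∈ Icc n (e n), t i ≤
      r * ENNReal.ofReal (c + r * K) * ∑' i, t i := by
  refine tsum_mul_sum_le _ t _ fun i => ?_
  calc ∑' n, {n | i ∈ Icc n (e n)}.indicator (fun n => ENNReal.ofReal (lam (n + r) - lam n)) n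
      ≤ ∑' n, {n | lam i - c ≤ lam n ∧ lam (n + r) ≤ lam i + r * K}.indicator
          (fun n => ENNReal.ofReal (lam (n + r) - lam n)) n := by
        refine ENNReal.tsum_le_tsum fun n =>
          Set.indicator_le_indicator_of_subset ?_ (fun _ => zero_le) n
        intro n (hn : i ∈ Icc n (e n))
        obtain ⟨hni, hie⟩ := mem_Icc.1 hn
        constructor
        · linarith [he n, hm hie]
        · linarith [sub_le_mul_of_gap_le hgap n r, hm hni]
    _ ≤ r * ENNReal.ofReal (c + r * K) := by
        convert tsum_indicator_sub_le hm r _ _ using 3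
        ring

theorem tsum_sub_mul_le_of_window_bound (hm : Monotone lam) {K c C : ℝ}
    (hgap : ∀ n, lam (n + 1) - lam n ≤ K) (r : ℕ) (e : ℤ → ℤ) (he : ∀ n, lam (e n) - lam n ≤ c)
    {x P S : ℤ → ℝ} (hP : ∀ n, 0 ≤ P n) (hS : ∀ i, 0 ≤ S i) (hC : 0 ≤ C)
    (hx : ∀ n, x n ≤ C * (P n + ∑ i ∈ Icc n (e n), S i)) :
    ∑' n, ENNReal.ofReal ((lam (n + r) - lam n) * x n) ≤ ENNReal.ofReal C *
      (∑' n, ENNReal.ofReal ((lam (n + r) - lam n) * P n) +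
        r * ENNReal.ofReal (c + r * K) * ∑' i, ENNReal.ofReal (S i)) := by
  have hu : ∀ n, 0 ≤ lam (n + r) - lam n := fun n => sub_nonneg.2 (hm (by omega))
  calc ∑' n, ENNReal.ofReal ((lam (n + r) - lam n) * x n)
      ≤ ∑' n, ENNReal.ofReal C * (ENNReal.ofReal ((lam (n + r) - lam n) * P n) +
          ENNReal.ofReal (lam (n + r) - lam n) * ∑ i ∈ Icc n (e n), ENNReal.ofReal (S i)) := by
        refine ENNReal.tsum_le_tsum fun n => ?_
        rw [← ENNReal.ofReal_sum_of_nonneg fun i _ => hS i, ← ENNReal.ofReal_mul (hu n),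
          ← ENNReal.ofReal_add (mul_nonneg (hu n) (hP n))
            (mul_nonneg (hu n) (sum_nonneg fun i _ => hS i)), ← ENNReal.ofReal_mul hC]
        exact ENNReal.ofReal_le_ofReal
          ((mul_le_mul_of_nonneg_left (hx n) (hu n)).trans_eq (by ring))
    _ = ENNReal.ofReal C * (∑' n, ENNReal.ofReal ((lam (n + r) - lam n) * P n) +
          ∑' n, ENNReal.ofReal (lam (n + r) - lam n) *
            ∑ i ∈ Icc n (e n), ENNReal.ofReal (S i)) := by
        rw [ENNReal.tsum_mul_left, ENNReal.tsum_add]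
    _ ≤ _ := by
        gcongr
        exact tsum_sub_mul_sum_Icc_le hm hgap r e he _

end Summation

/- In terms of these sums, `‖f‖_{eq,W}^p = dd2Sum + valueSum + dd1Sum` and
`‖f‖_{simp,W}^p = dd2Sum + centeredValueSum`. -/
noncomputable def dd2Sum (p : ℝ) (lam : ℤ → ℝ) (f : ℤ → ℂ) : ℝ≥0∞ :=
  ∑' n : ℤ, ENNReal.ofReal ((lam (n + 2) - lam n) * ‖dd2 lam f n‖ ^ p)

noncomputable def valueSum (p : ℝ) (lam : ℤ → ℝ) (f : ℤ → ℂ) : ℝ≥0∞ :=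
  ∑' n : ℤ, ENNReal.ofReal ((lam (n + 2) - lam n) * ‖f n‖ ^ p)

noncomputable def dd1Sum (p : ℝ) (lam : ℤ → ℝ) (f : ℤ → ℂ) : ℝ≥0∞ :=
  ∑' n : ℤ, ENNReal.ofReal ((lam (n + 2) - lam n) ^ (p + 1) * ‖dd1 lam f n‖ ^ p)

noncomputable def centeredValueSum (p : ℝ) (lam : ℤ → ℝ) (f : ℤ → ℂ) : ℝ≥0∞ :=
  ∑' n : ℤ, ENNReal.ofReal ((lam (n + 1) - lam (n - 1)) * ‖f n‖ ^ p)

section GlobalEstimates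

variable {lam : ℤ → ℝ} {f : ℤ → ℂ} {p K : ℝ}

theorem exists_window (hm : Monotone lam) (htop : Filter.Tendsto lam Filter.atTop Filter.atTop)
    (hgap : ∀ n, lam (n + 1) - lam n ≤ K) (k : ℤ) :
    ∃ b, 1 ≤ lam b - lam k ∧ lam b - lam k ≤ 1 + K := by
  obtain ⟨b, hb, hmin⟩ := Int.exists_least_of_bdd (P := fun z => lam k + 1 ≤ lam z)
    ⟨k, fun z hz => le_of_not_gt fun h => by linarith [hm h.le]⟩ (htop.eventually_ge_atTop _).exists
  have hprev : lam (b - 1) < lam k + 1 := lt_of_not_ge fun h => by have := hmin _ h; omega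
  have := hgap (b - 1)
  rw [sub_add_cancel] at this
  exact ⟨b, by linarith, by linarith⟩

theorem tsum_ofReal_add_eq {a b : ℤ → ℝ} (ha : ∀ i, 0 ≤ a i) (hb : ∀ i, 0 ≤ b i) :
    ∑' i, ENNReal.ofReal (a i + b i) = ∑' i, ENNReal.ofReal (a i) + ∑' i, ENNReal.ofReal (b i) := by
  simp_rw [ENNReal.ofReal_add (ha _) (hb _)]
  exact ENNReal.tsum_add

theorem tsum_sub_mul_norm_dd1_rpow_le (hp : 1 ≤ p) (hm : StrictMono lam)
    (htop : Filter.Tendsto lam Filter.atTop Filter.atTop) (hgap : ∀ n, lam (n + 1) - lam n ≤ K)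
    (r : ℕ) :
    ∑' k, ENNReal.ofReal ((lam (k + r) - lam k) * ‖dd1 lam f k‖ ^ p) ≤
      ENNReal.ofReal (32 * (1 + K) ^ 2) ^ p *
        (∑' k, ENNReal.ofReal ((lam (k + r) - lam k) * ‖f k‖ ^ p) +
          r * ENNReal.ofReal (2 * (1 + K) + r * K) *
            (dd2Sum p lam f + centeredValueSum p lam f)) := by
  choose e he₁ he₂ using exists_window hm.monotone htop hgap
  have hv : ∀ i, 0 ≤ lam (i + 1) - lam (i - 1) := fun i => sub_nonneg.2 (hm.monotone (by omega))
  have hw : ∀ i, 0 ≤ lam (i + 2) - lam i := fun i => sub_nonneg.2 (hm.monotone (by omega))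
  rw [ENNReal.ofReal_rpow_of_nonneg (by positivity) (by linarith), add_comm (dd2Sum p lam f),
    centeredValueSum, dd2Sum, ← tsum_ofReal_add_eq (fun i => mul_nonneg (hv i) (by positivity))
      (fun i => mul_nonneg (hw i) (by positivity))]
  refine tsum_sub_mul_le_of_window_bound hm.monotone hgap r (fun k => e (e k))
    (fun k => by linarith [he₂ k, he₂ (e k)]) (fun _ => by positivity)
    (fun i => add_nonneg (mul_nonneg (hv i) (by positivity)) (mul_nonneg (hw i) (by positivity)))
    (by positivity) fun k => ?_
  have hk : k < e k := hm.lt_iff_lt.1 (by linarith [he₁ k])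
  have hloc := norm_dd1_rpow_le_of_window (f := f) hp hm (he₁ k) (he₁ (e k))
    (M := 2 * (1 + K)) (by linarith [he₂ k, he₂ (e k)])
  rw [show 8 * (2 * (1 + K)) ^ 2 = 32 * (1 + K) ^ 2 by ring, add_assoc] at hloc
  refine hloc.trans (mul_le_mul_of_nonneg_left (add_le_add le_rfl ?_) (by positivity))
  exact sum_Ioc_add_sum_Ico_le_sum_Icc hm.monotone (g := fun i => ‖f i‖ ^ p)
    (fun _ => by positivity)
    (fun i => mul_nonneg (hw i) (by positivity))
    (Ioc_subset_Icc_self.trans (Icc_subset_Icc hk.le le_rfl))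
    (Ico_subset_Icc_self.trans (Icc_subset_Icc le_rfl (by omega)))

theorem tsum_sub_mul_norm_rpow_le (hp : 1 ≤ p) (hm : StrictMono lam)
    (htop : Filter.Tendsto lam Filter.atTop Filter.atTop) (hgap : ∀ n, lam (n + 1) - lam n ≤ K)
    (r : ℕ) :
    ∑' n, ENNReal.ofReal ((lam (n + r) - lam n) * ‖f n‖ ^ p) ≤
      ENNReal.ofReal (2 * (1 + K)) ^ p * (r * ENNReal.ofReal (1 + K + r * K) *
        (centeredValueSum p lam f +
          ∑' i, ENNReal.ofReal ((lam (i + 1) - lam i) * ‖dd1 lam f i‖ ^ p))) := by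
  choose e he₁ he₂ using exists_window hm.monotone htop hgap
  have hv : ∀ i, 0 ≤ lam (i + 1) - lam (i - 1) := fun i => sub_nonneg.2 (hm.monotone (by omega))
  have hg : ∀ i, 0 ≤ lam (i + 1) - lam i := fun i => sub_nonneg.2 (hm.monotone (by omega))
  have hK : 0 ≤ 2 * (1 + K) := by linarith [he₁ 0, he₂ 0]
  rw [ENNReal.ofReal_rpow_of_nonneg hK (by linarith),
    centeredValueSum, ← tsum_ofReal_add_eq (fun i => mul_nonneg (hv i) (by positivity))
      (fun i => mul_nonneg (hg i) (by positivity))]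
  have h := tsum_sub_mul_le_of_window_bound hm.monotone hgap r e he₂ (fun _ => le_rfl)
    (S := fun i => (lam (i + 1) - lam (i - 1)) * ‖f i‖ ^ p +
      (lam (i + 1) - lam i) * ‖dd1 lam f i‖ ^ p)
    (fun i => add_nonneg (mul_nonneg (hv i) (by positivity)) (mul_nonneg (hg i) (by positivity)))
    (Real.rpow_nonneg hK p) (x := fun n => ‖f n‖ ^ p) fun n => by
      rw [zero_add]
      exact (norm_rpow_le_of_window hp hm (he₁ n) (he₂ n)).trans
        (mul_le_mul_of_nonneg_left (sum_Ioc_add_sum_Ico_le_sum_Icc hm.monotone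
          (g := fun i => ‖f i‖ ^ p) (u := fun i => (lam (i + 1) - lam i) * ‖dd1 lam f i‖ ^ p)
          (fun _ => by positivity) (fun i => mul_nonneg (hg i) (by positivity))
          Ioc_subset_Icc_self Ico_subset_Icc_self) (Real.rpow_nonneg hK p))
  simpa only [mul_zero, ENNReal.ofReal_zero, tsum_zero, zero_add] using h

theorem dd1Sum_le (hp : 1 ≤ p) (hm : StrictMono lam) (hgap : ∀ n, lam (n + 1) - lam n ≤ K) :
    dd1Sum p lam f ≤ ENNReal.ofReal (2 * K) ^ p *
      ∑' n, ENNReal.ofReal ((lam (n + 2) - lam n) * ‖dd1 lam f n‖ ^ p) := by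
  rw [← ENNReal.tsum_mul_left]
  refine ENNReal.tsum_le_tsum fun n => ?_
  have hw : 0 < lam (n + 2) - lam n := sub_pos.2 (hm (by omega))
  have hw2 : lam (n + 2) - lam n ≤ 2 * K := by
    have := sub_le_mul_of_gap_le hgap n 2
    push_cast at this
    linarith
  rw [ENNReal.ofReal_rpow_of_nonneg (by linarith) (by linarith), ← ENNReal.ofReal_mul
    (Real.rpow_nonneg (by linarith) p)]
  refine ENNReal.ofReal_le_ofReal ?_
  rw [Real.rpow_add_one hw.ne', mul_comm (_ ^ p) (lam (n + 2) - lam n), mul_assoc,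
    mul_left_comm]
  gcongr

end GlobalEstimates

section EasyDirection

variable {lam : ℤ → ℝ} {f : ℤ → ℂ} {p : ℝ}

theorem centered_mul_norm_rpow_le (hp : 1 ≤ p) (hm : StrictMono lam) (n : ℤ) :
    (lam (n + 1) - lam (n - 1)) * ‖f n‖ ^ p ≤ (lam (n + 2) - lam n) * ‖f n‖ ^ p +
      2 ^ (p - 1) * ((lam (n - 1 + 2) - lam (n - 1)) * ‖f (n - 1)‖ ^ p +
        (lam (n - 1 + 2) - lam (n - 1)) ^ (p + 1) * ‖dd1 lam f (n - 1)‖ ^ p) := by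
  have hp0 : 0 ≤ p := by linarith
  rw [show n - 1 + 2 = n + 1 by ring]
  set h := lam n - lam (n - 1)
  have hh : 0 ≤ h := sub_nonneg.2 (hm.monotone (by omega))
  have hhw : h ≤ lam (n + 1) - lam (n - 1) := by linarith [hm.monotone (by omega : n ≤ n + 1)]
  have hstep : ‖f n‖ ≤ ‖f (n - 1)‖ + h * ‖dd1 lam f (n - 1)‖ := by
    have := sub_eq_mul_dd1 (f := f) hm (n - 1)
    rw [sub_add_cancel, sub_eq_iff_eq_add'] at this
    rw [this]
    refine (norm_add_le _ _).trans (le_of_eq ?_)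
    rw [norm_mul, Complex.norm_real, Real.norm_of_nonneg hh]
  have hpow : ‖f n‖ ^ p ≤ 2 ^ (p - 1) * (‖f (n - 1)‖ ^ p + h ^ p * ‖dd1 lam f (n - 1)‖ ^ p) := by
    rw [← Real.mul_rpow hh (norm_nonneg _)]
    exact (Real.rpow_le_rpow (norm_nonneg _) hstep hp0).trans
      (add_rpow_le_two_mul hp (norm_nonneg _) (by positivity))
  calc (lam (n + 1) - lam (n - 1)) * ‖f n‖ ^ p
      = (lam (n + 1) - lam n) * ‖f n‖ ^ p + h * ‖f n‖ ^ p := by ring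
    _ ≤ (lam (n + 2) - lam n) * ‖f n‖ ^ p +
        2 ^ (p - 1) * (h * ‖f (n - 1)‖ ^ p + h ^ (p + 1) * ‖dd1 lam f (n - 1)‖ ^ p) := by
        refine add_le_add (mul_le_mul_of_nonneg_right ?_ (by positivity)) ?_
        · linarith [hm.monotone (by omega : n + 1 ≤ n + 2)]
        · calc h * ‖f n‖ ^ p
              ≤ h * (2 ^ (p - 1) * (‖f (n - 1)‖ ^ p + h ^ p * ‖dd1 lam f (n - 1)‖ ^ p)) :=
                mul_le_mul_of_nonneg_left hpow hh
            _ = 2 ^ (p - 1) * (h * ‖f (n - 1)‖ ^ p + h ^ (p + 1) * ‖dd1 lam f (n - 1)‖ ^ p) := by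
                rw [Real.rpow_add_one' hh (by linarith)]
                ring
    _ ≤ _ := by gcongr

theorem centeredValueSum_le (hp : 1 ≤ p) (hm : StrictMono lam) :
    centeredValueSum p lam f ≤
      valueSum p lam f + ENNReal.ofReal (2 ^ (p - 1)) * (valueSum p lam f + dd1Sum p lam f) := by
  have hw : ∀ n, 0 ≤ lam (n + 2) - lam n := fun n => sub_nonneg.2 (hm.monotone (by omega))
  have hshift : ∀ g : ℤ → ℝ≥0∞, ∑' n, g (n - 1) = ∑' n, g n := (Equiv.subRight 1).tsum_eq
  calc centeredValueSum p lam f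
      ≤ ∑' n, (ENNReal.ofReal ((lam (n + 2) - lam n) * ‖f n‖ ^ p) +
          ENNReal.ofReal (2 ^ (p - 1)) *
            (ENNReal.ofReal ((lam (n - 1 + 2) - lam (n - 1)) * ‖f (n - 1)‖ ^ p) +
              ENNReal.ofReal ((lam (n - 1 + 2) - lam (n - 1)) ^ (p + 1) *
                ‖dd1 lam f (n - 1)‖ ^ p))) := by
        refine ENNReal.tsum_le_tsum fun n => ?_
        rw [← ENNReal.ofReal_add (mul_nonneg (hw _) (by positivity))
            (mul_nonneg (Real.rpow_nonneg (hw _) _) (by positivity)),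
          ← ENNReal.ofReal_mul (by positivity),
          ← ENNReal.ofReal_add (mul_nonneg (hw n) (by positivity))
            (mul_nonneg (by positivity) (add_nonneg (mul_nonneg (hw _) (by positivity))
              (mul_nonneg (Real.rpow_nonneg (hw _) _) (by positivity))))]
        exact ENNReal.ofReal_le_ofReal (centered_mul_norm_rpow_le hp hm n)
    _ = _ := by
        rw [ENNReal.tsum_add, ENNReal.tsum_mul_left, ENNReal.tsum_add,
          hshift fun m => ENNReal.ofReal ((lam (m + 2) - lam m) * ‖f m‖ ^ p),
          hshift fun m => ENNReal.ofReal ((lam (m + 2) - lam m) ^ (p + 1) * ‖dd1 lam f m‖ ^ p)]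
        rfl

theorem simpSum_le_eqSum (hp : 1 ≤ p) (hm : StrictMono lam) :
    dd2Sum p lam f + centeredValueSum p lam f ≤
      ENNReal.ofReal 2 ^ p * (dd2Sum p lam f + valueSum p lam f + dd1Sum p lam f) := by
  set c := ENNReal.ofReal (2 ^ (p - 1))
  have hc : 1 ≤ c := by
    rw [← ENNReal.ofReal_one]
    exact ENNReal.ofReal_le_ofReal (Real.one_le_rpow one_le_two (by linarith))
  have h2 : ENNReal.ofReal 2 ^ p = c + c := by
    rw [ENNReal.ofReal_rpow_of_nonneg zero_le_two (by linarith), ← ENNReal.ofReal_add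
      (by positivity) (by positivity), ← two_mul, ← Real.rpow_one_add' zero_le_two (by linarith)]
    ring_nf
  calc dd2Sum p lam f + centeredValueSum p lam f
      ≤ dd2Sum p lam f + (valueSum p lam f + c * (valueSum p lam f + dd1Sum p lam f)) :=
        add_le_add le_rfl (centeredValueSum_le hp hm)
    _ = dd2Sum p lam f + (1 + c) * valueSum p lam f + c * dd1Sum p lam f := by ring
    _ ≤ (c + c) * dd2Sum p lam f + (c + c) * valueSum p lam f + (c + c) * dd1Sum p lam f := by
        refine add_le_add (add_le_add ?_ ?_) ?_
        · exact le_mul_of_one_le_left' (le_add_right hc)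
        · gcongr
        · gcongr
          exact le_add_self
    _ = _ := by rw [h2]; ring

end EasyDirection

section HardDirection

variable {lam : ℤ → ℝ} {f : ℤ → ℂ} {p K : ℝ}

theorem tsum_gap_mul_norm_dd1_rpow_le (hp : 1 ≤ p) (hm : StrictMono lam)
    (htop : Filter.Tendsto lam Filter.atTop Filter.atTop) (hgap : ∀ n, lam (n + 1) - lam n ≤ K) :
    ∑' k, ENNReal.ofReal ((lam (k + 1) - lam k) * ‖dd1 lam f k‖ ^ p) ≤
      ENNReal.ofReal (32 * (1 + K) ^ 2 * (1 + (2 * (1 + K) + K))) ^ p *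
        (dd2Sum p lam f + centeredValueSum p lam f) := by
  have hK : 0 ≤ K := (sub_pos.2 (hm (lt_add_one 0))).le.trans (hgap 0)
  have h := tsum_sub_mul_norm_dd1_rpow_le (f := f) hp hm htop hgap 1
  simp only [Nat.cast_one, one_mul] at h
  refine le_ofReal_rpow_mul_trans (by positivity) (by linarith) h ?_
  have hcentered : ∑' k, ENNReal.ofReal ((lam (k + 1) - lam k) * ‖f k‖ ^ p) ≤
      dd2Sum p lam f + centeredValueSum p lam f :=
    (ENNReal.tsum_le_tsum fun k => ENNReal.ofReal_le_ofReal (mul_le_mul_of_nonneg_right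
      (by linarith [hm.monotone (by omega : k - 1 ≤ k)]) (by positivity))).trans le_add_self
  calc _ ≤ ENNReal.ofReal (1 + (2 * (1 + K) + K)) *
        (dd2Sum p lam f + centeredValueSum p lam f) := by
        rw [ENNReal.ofReal_add zero_le_one (by positivity), ENNReal.ofReal_one, add_mul, one_mul]
        gcongr
    _ ≤ _ := ofReal_mul_le_ofReal_rpow_mul (by linarith) hp _

theorem exists_eqSum_le_simpSum (hK : 0 ≤ K) :
    ∃ Γ : ℝ, 1 ≤ Γ ∧ ∀ p : ℝ, 1 ≤ p → ∀ lam : ℤ → ℝ, StrictMono lam →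
      Filter.Tendsto lam Filter.atTop Filter.atTop → (∀ n, lam (n + 1) - lam n ≤ K) →
      ∀ f : ℤ → ℂ, dd2Sum p lam f + valueSum p lam f + dd1Sum p lam f ≤
        ENNReal.ofReal Γ ^ p * (dd2Sum p lam f + centeredValueSum p lam f) := by
  set L := 1 + K
  set τ := 32 * L ^ 2 * (1 + (2 * L + K))
  set β := 2 * L * (2 * (L + 2 * K) * (1 + τ))
  set ω := 32 * L ^ 2 * (β + 2 * (2 * L + 2 * K))
  have hτ : 0 ≤ τ := by positivity
  have hβ : 0 ≤ β := by positivity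
  refine ⟨1 + β + 2 * K * ω, by nlinarith [mul_nonneg hK (by positivity : 0 ≤ ω)],
    fun p hp lam hm htop hgap f => ?_⟩
  have hp0 : 0 ≤ p := by linarith
  set S := dd2Sum p lam f + centeredValueSum p lam f
  have hS : ∀ {X}, X ≤ S → X ≤ ENNReal.ofReal 1 ^ p * S := fun h => by simpa using h
  have hvalue : valueSum p lam f ≤ ENNReal.ofReal β ^ p * S := by
    have h := tsum_sub_mul_norm_rpow_le (f := f) hp hm htop hgap 2
    simp only [Nat.cast_ofNat] at h
    refine le_ofReal_rpow_mul_trans (by positivity) hp0 h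
      (le_ofReal_rpow_mul_trans (by positivity) hp0 ?_ (add_le_ofReal_rpow_mul zero_le_one hτ hp
        (hS le_add_self) (tsum_gap_mul_norm_dd1_rpow_le hp hm htop hgap)))
    rw [← ENNReal.ofReal_ofNat 2, ← ENNReal.ofReal_mul zero_le_two]
    exact ofReal_mul_le_ofReal_rpow_mul (by linarith) hp _
  have hdd1 : dd1Sum p lam f ≤ ENNReal.ofReal (2 * K * ω) ^ p * S := by
    have h := tsum_sub_mul_norm_dd1_rpow_le (f := f) hp hm htop hgap 2
    simp only [Nat.cast_ofNat] at h
    refine le_ofReal_rpow_mul_trans (by positivity) hp0 (dd1Sum_le hp hm hgap)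
      (le_ofReal_rpow_mul_trans (by positivity) hp0 h (add_le_ofReal_rpow_mul hβ
        (by positivity) hp hvalue ?_))
    rw [← ENNReal.ofReal_ofNat 2, ← ENNReal.ofReal_mul zero_le_two]
    exact ofReal_mul_le_ofReal_rpow_mul (by linarith) hp _
  exact add_le_ofReal_rpow_mul (by positivity) (by positivity) hp
    (add_le_ofReal_rpow_mul zero_le_one hβ hp (hS le_self_add) hvalue) hdd1

end HardDirection

/-- for every `K > 0` there are constants `0 < c ≤ C` depending only on `K`
such that (for `r = 2`, steps bounded by `K`) the norms `(‖f‖_{eq,W}^p)^{1/p}` and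
`(‖f‖_{simp,W}^p)^{1/p}` are equivalent, where
`‖f‖_{eq,W}^p = ∑ (λ_{n+2}-λ_n)|f[λ_n,λ_{n+1},λ_{n+2}]|^p + ∑ (λ_{n+2}-λ_n)|f_n|^p
  + ∑ (λ_{n+2}-λ_n)^{p+1}|f[λ_n,λ_{n+1}]|^p` and
`‖f‖_{simp,W}^p = ∑ (λ_{n+2}-λ_n)|f[λ_n,λ_{n+1},λ_{n+2}]|^p + ∑ (λ_{n+1}-λ_{n-1})|f_n|^p`. -/
theorem stmt16 (K : ℝ) (hK : 0 < K) :
    ∃ c C : ℝ, 0 < c ∧ c ≤ C ∧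
      ∀ p : ℝ, 1 ≤ p → ∀ lam : ℤ → ℝ, GoodSeq lam →
        (∀ n : ℤ, lam (n + 1) - lam n ≤ K) → ∀ f : ℤ → ℂ,
        ENNReal.ofReal c *
            ((∑' n : ℤ, ENNReal.ofReal ((lam (n + 2) - lam n) *
                ‖dd2 lam f n‖ ^ p)) +
              (∑' n : ℤ, ENNReal.ofReal ((lam (n + 2) - lam n) *
                ‖f n‖ ^ p)) +
              ∑' n : ℤ, ENNReal.ofReal ((lam (n + 2) - lam n) ^ (p + 1) *
                ‖dd1 lam f n‖ ^ p)) ^ (1 / p) ≤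
          ((∑' n : ℤ, ENNReal.ofReal ((lam (n + 2) - lam n) *
              ‖dd2 lam f n‖ ^ p)) +
            ∑' n : ℤ, ENNReal.ofReal ((lam (n + 1) - lam (n - 1)) *
              ‖f n‖ ^ p)) ^ (1 / p) ∧
        ((∑' n : ℤ, ENNReal.ofReal ((lam (n + 2) - lam n) *
              ‖dd2 lam f n‖ ^ p)) +
            ∑' n : ℤ, ENNReal.ofReal ((lam (n + 1) - lam (n - 1)) *
              ‖f n‖ ^ p)) ^ (1 / p) ≤
          ENNReal.ofReal C *
            ((∑' n : ℤ, ENNReal.ofReal ((lam (n + 2) - lam n) *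
                ‖dd2 lam f n‖ ^ p)) +
              (∑' n : ℤ, ENNReal.ofReal ((lam (n + 2) - lam n) *
                ‖f n‖ ^ p)) +
              ∑' n : ℤ, ENNReal.ofReal ((lam (n + 2) - lam n) ^ (p + 1) *
                ‖dd1 lam f n‖ ^ p)) ^ (1 / p) := by
  obtain ⟨Γ, hΓ, hard⟩ := exists_eqSum_le_simpSum hK.le
  have hΓ0 : 0 < Γ := by linarith
  refine ⟨Γ⁻¹, 2, inv_pos.2 hΓ0, (inv_le_one_of_one_le₀ hΓ).trans one_le_two,
    fun p hp lam ⟨hm, _, htop⟩ hgap f => ⟨?_, ?_⟩⟩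
  · calc ENNReal.ofReal Γ⁻¹ * (dd2Sum p lam f + valueSum p lam f + dd1Sum p lam f) ^ (1 / p)
        ≤ ENNReal.ofReal Γ⁻¹ *
            (ENNReal.ofReal Γ * (dd2Sum p lam f + centeredValueSum p lam f) ^ (1 / p)) := by
          gcongr
          exact rpow_one_div_le_of_le_rpow_mul (by linarith) (hard p hp lam hm htop hgap f)
      _ = (dd2Sum p lam f + centeredValueSum p lam f) ^ (1 / p) := by
          rw [← mul_assoc, ← ENNReal.ofReal_mul (inv_nonneg.2 hΓ0.le), inv_mul_cancel₀ hΓ0.ne',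
            ENNReal.ofReal_one, one_mul]
  · exact rpow_one_div_le_of_le_rpow_mul (by linarith) (simpSum_le_eqSum hp hm)
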